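/- arXiv:1811.06626 — 5 statements merged into one kernel-verified Lean document; each statement's English description precedes it below -/
import Mathlib

section
/- Let F : ℝ → ℝ be twice differentiable with second derivative everywhere nonnegative (so F is convex), and let D_F(x, y) = F(x) - F(y) - (x - y) * (deriv F y) denote the Bregman divergence generated by F. Then for any x ∈ ℝ and any a ≤ b, the point y* = max a (min x b) (the clamp of x to the interval [a, b]) minimizes y ↦ D_F(x, y) over [a, b]: for every y ∈ [a, b], D_F(x, y*) ≤ D_F(x, y). -/
/-- The Bregman divergence generated by a differentiable function `F : ℝ → ℝ`. -/
noncomputable def bregman (F : ℝ → ℝ) (x y : ℝ) : ℝ :=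
  F x - F y - (x - y) * deriv F y

theorem clamp_minimizes_bregman (F : ℝ → ℝ)
    (hF : Differentiable ℝ F) (hF' : Differentiable ℝ (deriv F))
    (hF'' : ∀ y, 0 ≤ deriv (deriv F) y)
    (x a b : ℝ) (hab : a ≤ b) :
    ∀ y ∈ Set.Icc a b, bregman F x (max a (min x b)) ≤ bregman F x y := by
  set g : ℝ → ℝ := fun y => bregman F x y with hg
  have hderiv : ∀ y, HasDerivAt g ((y - x) * deriv (deriv F) y) y := by
    intro y
    have h1 : HasDerivAt F (deriv F y) y := (hF y).hasDerivAt
    have h2 : HasDerivAt (deriv F) (deriv (deriv F) y) y := (hF' y).hasDerivAt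
    have h3 : HasDerivAt (fun y : ℝ => x - y) (-1) y := by
      simpa using (hasDerivAt_id y).const_sub x
    have h4 : HasDerivAt (fun y => F x - F y - (x - y) * deriv F y)
        (0 - deriv F y - ((-1) * deriv F y + (x - y) * deriv (deriv F) y)) y :=
      ((hasDerivAt_const y (F x)).sub h1).sub (h3.mul h2)
    have : g = fun y => F x - F y - (x - y) * deriv F y := by
      funext z; simp [hg, bregman]
    rw [this]
    convert h4 using 1
    ring
  have hdiff : Differentiable ℝ g := fun y => (hderiv y).differentiableAt
  have hmono : MonotoneOn g (Set.Ici x) := by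
    apply monotoneOn_of_deriv_nonneg (convex_Ici x) hdiff.continuous.continuousOn
      (hdiff.differentiableOn)
    intro y hy
    rw [(hderiv y).deriv]
    rw [interior_Ici] at hy
    have hxy : x ≤ y := le_of_lt hy
    nlinarith [hF'' y]
  have hanti : AntitoneOn g (Set.Iic x) := by
    apply antitoneOn_of_deriv_nonpos (convex_Iic x) hdiff.continuous.continuousOn
      (hdiff.differentiableOn)
    intro y hy
    rw [(hderiv y).deriv]
    rw [interior_Iic] at hy
    have hxy : y ≤ x := le_of_lt hy
    nlinarith [hF'' y]
  have hgx : g x = 0 := by simp [hg, bregman]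
  intro y hy
  obtain ⟨hay, hyb⟩ := hy
  rcases le_total x a with hxa | hax
  · have hc : max a (min x b) = a := by
      rw [min_eq_left (hxa.trans hab), max_eq_left hxa]
    show g (max a (min x b)) ≤ g y
    rw [hc]
    exact hmono hxa (hxa.trans hay) hay
  · rcases le_total b x with hbx | hxb
    · have hc : max a (min x b) = b := by
        rw [min_eq_right hbx, max_eq_right hab]
      show g (max a (min x b)) ≤ g y
      rw [hc]
      exact hanti (hyb.trans hbx) hbx hyb
    · have hc : max a (min x b) = x := by
        rw [min_eq_left hxb, max_eq_right hax]
      show g (max a (min x b)) ≤ g y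
      rw [hc, hgx]
      rcases le_total y x with hyx | hxy
      · have := hanti hyx (le_refl x) hyx
        rw [hgx] at this; linarith
      · have := hmono (le_refl x) hxy hxy
        rw [hgx] at this; linarith
end

section
/- Let F : ℝ → ℝ be twice differentiable with second derivative everywhere nonnegative (so F is convex), and let D_F(x, y) = F(x) - F(y) - (x - y) * (deriv F y). Then for any x ∈ ℝ and any a ≤ b, the infimum over y ∈ [a, b] of D_F(x, y) equals D_F(x, b) if x > b, equals D_F(x, a) if x < a, and equals 0 if a ≤ x ≤ b. -/
open Set

theorem isLeast_image_Icc_projIcc {α β : Type*} [LinearOrder α] [Preorder β] {g : α → β}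
    {a b c : α} (hab : a ≤ b) (hanti : AntitoneOn g (Iic c)) (hmono : MonotoneOn g (Ici c)) :
    IsLeast (g '' Icc a b) (g (projIcc a b hab c)) := by
  refine ⟨mem_image_of_mem g (projIcc a b hab c).2, ?_⟩
  rintro _ ⟨y, ⟨hay, hyb⟩, rfl⟩
  rw [coe_projIcc]
  rcases le_total y c with hyc | hcy
  · exact hanti hyc (max_le (hay.trans hyc) (min_le_right b c))
      (le_max_of_le_right (le_min hyb hyc))
  · exact hmono (le_max_of_le_right (le_min (le_trans hcy hyb) le_rfl))
      hcy (max_le hay (min_le_of_right_le hcy))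

@[simp]
theorem bregman_self (F : ℝ → ℝ) (x : ℝ) : bregman F x x = 0 := by
  simp [bregman]

section

variable {F : ℝ → ℝ}

theorem hasDerivAt_bregman_right {x y : ℝ} (hF : DifferentiableAt ℝ F y)
    (hF' : DifferentiableAt ℝ (deriv F) y) :
    HasDerivAt (bregman F x) ((y - x) * deriv (deriv F) y) y := by
  have h := ((hasDerivAt_const y (F x)).sub hF.hasDerivAt).sub
    (((hasDerivAt_id' y).const_sub x).mul hF'.hasDerivAt)
  exact h.congr_deriv (by ring)

variable (hF : Differentiable ℝ F) (hF' : Differentiable ℝ (deriv F))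
  (hF'' : ∀ y, 0 ≤ deriv (deriv F) y)
include hF hF' hF''

theorem antitoneOn_bregman_Iic (x : ℝ) : AntitoneOn (bregman F x) (Iic x) := by
  refine antitoneOn_of_hasDerivWithinAt_nonpos (convex_Iic x) ?_
    (fun y _ => (hasDerivAt_bregman_right (hF y) (hF' y)).hasDerivWithinAt) ?_
  · exact fun y _ => (hasDerivAt_bregman_right (hF y) (hF' y)).continuousAt.continuousWithinAt
  · intro y hy
    rw [interior_Iic] at hy
    exact mul_nonpos_of_nonpos_of_nonneg (sub_nonpos.2 hy.le) (hF'' y)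

theorem monotoneOn_bregman_Ici (x : ℝ) : MonotoneOn (bregman F x) (Ici x) := by
  refine monotoneOn_of_hasDerivWithinAt_nonneg (convex_Ici x) ?_
    (fun y _ => (hasDerivAt_bregman_right (hF y) (hF' y)).hasDerivWithinAt) ?_
  · exact fun y _ => (hasDerivAt_bregman_right (hF y) (hF' y)).continuousAt.continuousWithinAt
  · intro y hy
    rw [interior_Ici] at hy
    exact mul_nonneg (sub_nonneg.2 hy.le) (hF'' y)

end

theorem sInf_bregman_eq_clipped (F : ℝ → ℝ)
    (hF : Differentiable ℝ F) (hF' : Differentiable ℝ (deriv F))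
    (hF'' : ∀ y, 0 ≤ deriv (deriv F) y)
    (x a b : ℝ) (hab : a ≤ b) :
    sInf ((fun y => bregman F x y) '' Set.Icc a b) =
      if b < x then bregman F x b
      else if x < a then bregman F x a
      else 0 := by
  rw [(isLeast_image_Icc_projIcc hab (antitoneOn_bregman_Iic hF hF' hF'' x)
    (monotoneOn_bregman_Ici hF hF' hF'' x)).csInf_eq]
  split_ifs with hbx hxa
  · rw [projIcc_of_right_le _ hbx.le]
  · rw [projIcc_of_le_left _ hxa.le]
  · rw [projIcc_of_mem _ ⟨not_lt.1 hxa, not_lt.1 hbx⟩, bregman_self]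
end

section
/- Let F : ℝ → ℝ be differentiable and convex, let D_F(x, y) = F(x) - F(y) - (x - y) * (deriv F y), and fix a ≤ b. Then the function x ↦ D_F(x, max a (min x b)) (the Bregman divergence from x to its clamp onto [a, b], i.e., the clipped Set KL divergence) is convex on ℝ. -/
/-- Tangent line inequality: the Bregman divergence of a convex differentiable
function is nonnegative. -/
lemma bregman_nonneg (F : ℝ → ℝ) (hF : Differentiable ℝ F)
    (hFconv : ConvexOn ℝ Set.univ F) (x y : ℝ) : 0 ≤ bregman F x y := by
  unfold bregman
  rcases lt_trichotomy x y with h | h | h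
  · have := hFconv.slope_le_deriv (Set.mem_univ x) (Set.mem_univ y) h (hF y)
    rw [slope_def_field, div_le_iff₀ (by linarith)] at this
    nlinarith
  · simp [h]
  · have := hFconv.deriv_le_slope (Set.mem_univ y) (Set.mem_univ x) h (hF y)
    rw [slope_def_field, le_div_iff₀ (by linarith)] at this
    nlinarith

/-- If `h` is convex with global minimum at `a`, then `x ↦ h (min x a)` is convex. -/
lemma convexOn_comp_min (h : ℝ → ℝ) (hconv : ConvexOn ℝ Set.univ h) (a : ℝ)
    (hmin : ∀ t, h a ≤ h t) : ConvexOn ℝ Set.univ (fun x => h (min x a)) := by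
  refine ⟨convex_univ, fun x _ y _ p q hp hq hpq => ?_⟩
  simp only [smul_eq_mul]
  set m : ℝ := p * min x a + q * min y a with hm
  have haa : p * a + q * a = a := by
    have hq' : q = 1 - p := by linarith
    subst hq'; ring
  have hma : m ≤ a := by
    nlinarith [mul_le_mul_of_nonneg_left (min_le_right x a) hp,
      mul_le_mul_of_nonneg_left (min_le_right y a) hq]
  have hmz : m ≤ min (p * x + q * y) a := by
    refine le_min ?_ hma
    nlinarith [mul_le_mul_of_nonneg_left (min_le_left x a) hp,
      mul_le_mul_of_nonneg_left (min_le_left y a) hq]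
  have hz : min (p * x + q * y) a ∈ segment ℝ m a := by
    rw [segment_eq_Icc hma]
    exact ⟨hmz, min_le_right _ _⟩
  have h1 : h (min (p * x + q * y) a) ≤ max (h m) (h a) :=
    hconv.le_on_segment (Set.mem_univ m) (Set.mem_univ a) hz
  have h2 : max (h m) (h a) = h m := max_eq_left (hmin m)
  have h3 : h m ≤ p * h (min x a) + q * h (min y a) := by
    have := hconv.2 (Set.mem_univ (min x a)) (Set.mem_univ (min y a)) hp hq hpq
    simpa using this
  calc h (min (p * x + q * y) a) ≤ h m := by rw [h2] at h1; exact h1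
    _ ≤ _ := h3

/-- If `h` is convex with global minimum at `b`, then `x ↦ h (max x b)` is convex. -/
lemma convexOn_comp_max (h : ℝ → ℝ) (hconv : ConvexOn ℝ Set.univ h) (b : ℝ)
    (hmin : ∀ t, h b ≤ h t) : ConvexOn ℝ Set.univ (fun x => h (max x b)) := by
  refine ⟨convex_univ, fun x _ y _ p q hp hq hpq => ?_⟩
  simp only [smul_eq_mul]
  set m : ℝ := p * max x b + q * max y b with hm
  have hbb : p * b + q * b = b := by
    have hq' : q = 1 - p := by linarith
    subst hq'; ring
  have hbm : b ≤ m := by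
    nlinarith [mul_le_mul_of_nonneg_left (le_max_right x b) hp,
      mul_le_mul_of_nonneg_left (le_max_right y b) hq]
  have hzm : max (p * x + q * y) b ≤ m := by
    refine max_le ?_ hbm
    nlinarith [mul_le_mul_of_nonneg_left (le_max_left x b) hp,
      mul_le_mul_of_nonneg_left (le_max_left y b) hq]
  have hz : max (p * x + q * y) b ∈ segment ℝ b m := by
    rw [segment_eq_Icc hbm]
    exact ⟨le_max_right _ _, hzm⟩
  have h1 : h (max (p * x + q * y) b) ≤ max (h b) (h m) :=
    hconv.le_on_segment (Set.mem_univ b) (Set.mem_univ m) hz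
  have h2 : max (h b) (h m) = h m := max_eq_right (hmin m)
  have h3 : h m ≤ p * h (max x b) + q * h (max y b) := by
    have := hconv.2 (Set.mem_univ (max x b)) (Set.mem_univ (max y b)) hp hq hpq
    simpa using this
  calc h (max (p * x + q * y) b) ≤ h m := by rw [h2] at h1; exact h1
    _ ≤ _ := h3

/-- An affine function is concave. -/
lemma concaveOn_affine (c d : ℝ) : ConcaveOn ℝ Set.univ (fun t : ℝ => c * t + d) := by
  refine ⟨convex_univ, fun x _ y _ p q hp hq hpq => ?_⟩
  simp only [smul_eq_mul]
  apply le_of_eq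
  have hq' : q = 1 - p := by linarith
  subst hq'
  ring

theorem bregman_to_clamp_convex (F : ℝ → ℝ)
    (hF : Differentiable ℝ F) (hFconv : ConvexOn ℝ Set.univ F)
    (a b : ℝ) (hab : a ≤ b) :
    ConvexOn ℝ Set.univ (fun x => bregman F x (max a (min x b))) := by
  set g1 : ℝ → ℝ := fun t => bregman F t a with hg1
  set g2 : ℝ → ℝ := fun t => bregman F t b with hg2
  have hg1conv : ConvexOn ℝ Set.univ g1 := by
    have : g1 = fun t => F t - (deriv F a * t + (F a - a * deriv F a)) := by
      funext t; simp [hg1, bregman]; ring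
    rw [this]
    exact hFconv.sub (concaveOn_affine _ _)
  have hg2conv : ConvexOn ℝ Set.univ g2 := by
    have : g2 = fun t => F t - (deriv F b * t + (F b - b * deriv F b)) := by
      funext t; simp [hg2, bregman]; ring
    rw [this]
    exact hFconv.sub (concaveOn_affine _ _)
  have hg1a : g1 a = 0 := by simp [hg1, bregman]
  have hg2b : g2 b = 0 := by simp [hg2, bregman]
  have hg1min : ∀ t, g1 a ≤ g1 t := fun t => by
    rw [hg1a]; exact bregman_nonneg F hF hFconv t a
  have hg2min : ∀ t, g2 b ≤ g2 t := fun t => by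
    rw [hg2b]; exact bregman_nonneg F hF hFconv t b
  have key : (fun x => bregman F x (max a (min x b)))
      = fun x => g1 (min x a) + g2 (max x b) := by
    funext x
    rcases le_total x a with hxa | hax
    · have h1 : min x b = x := min_eq_left (hxa.trans hab)
      have h2 : max a x = a := max_eq_left hxa
      have h3 : min x a = x := min_eq_left hxa
      have h4 : max x b = b := max_eq_right (hxa.trans hab)
      rw [h1, h2, h3, h4, hg2b]
      simp [hg1]
    · rcases le_total x b with hxb | hbx
      · have h1 : min x b = x := min_eq_left hxb
        have h2 : max a x = x := max_eq_right hax
        have h3 : min x a = a := min_eq_right hax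
        have h4 : max x b = b := max_eq_right hxb
        rw [h1, h2, h3, h4, hg1a, hg2b]
        simp [bregman]
      · have h1 : min x b = b := min_eq_right hbx
        have h2 : max a b = b := max_eq_right hab
        have h3 : min x a = a := min_eq_right hax
        have h4 : max x b = x := max_eq_left hbx
        rw [h1, h2, h3, h4, hg1a]
        simp [hg2]
  rw [key]
  exact (convexOn_comp_min g1 hg1conv a hg1min).add (convexOn_comp_max g2 hg2conv b hg2min)
end

section
/- Fix β > 0 and β̂ > 0. Then the infimum, over β̃ ∈ (0, β], of the Kullback–Leibler divergence from the exponential distribution with mean β̃ (rate 1/β̃) to the exponential distribution with mean β̂ (rate 1/β̂), equals ENNReal.ofReal (Real.log β̂ + β / β̂ - Real.log β - 1) if β̂ > β, and equals 0 if β̂ ≤ β. -/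
open MeasureTheory
open scoped ENNReal

open Classical in
/-- Kullback-Leibler divergence between two measures (as in Mathlib's `InformationTheory.klDiv`). -/
noncomputable def klDiv {α : Type*} [MeasurableSpace α] (μ ν : Measure α) : ℝ≥0∞ :=
  if μ ≪ ν ∧ Integrable (llr μ ν) μ then ENNReal.ofReal (∫ x, llr μ ν x ∂μ) else ∞

/-!
`Exp(a)` has density `(a / b) * exp ((b - a) * x)` with respect to `Exp(b)`, so its log-likelihood
ratio is affine in `x`, and since `Exp(a)` has mean `1 / a` the divergence is
`log a - log b + b / a - 1`. In terms of the means `s = 1 / a`, `t = 1 / b` this is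
`log t - log s + s / t - 1`, which decreases in `s` on `(0, t]` and vanishes at `s = t`; hence the
infimum over `s ∈ (0, β]` is attained at `s = min β t`, i.e. at the boundary `β` when `β < t`.
-/

open Real Set ProbabilityTheory

section WithDensity

variable {α : Type*} [MeasurableSpace α] {ν : Measure α} [SigmaFinite ν] {f : α → ℝ}

lemma llr_withDensity_ofReal (hf : Measurable f) (hf_nonneg : 0 ≤ f) :
    llr (ν.withDensity fun x ↦ ENNReal.ofReal (f x)) ν =ᵐ[ν] fun x ↦ log (f x) := by
  filter_upwards [Measure.rnDeriv_withDensity ν hf.ennreal_ofReal] with x hx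
  rw [llr, hx, ENNReal.toReal_ofReal (hf_nonneg x)]

lemma klDiv_eq_ofReal_integral_log_of_eq_withDensity {μ : Measure α}
    (hμ : μ = ν.withDensity fun x ↦ ENNReal.ofReal (f x)) (hf : Measurable f)
    (hf_nonneg : 0 ≤ f)
    (h_int : Integrable (fun x ↦ log (f x)) μ) :
    klDiv μ ν = ENNReal.ofReal (∫ x, log (f x) ∂μ) := by
  have h_ac : μ ≪ ν := hμ ▸ withDensity_absolutelyContinuous ν _
  have h_llr : llr μ ν =ᵐ[μ] fun x ↦ log (f x) :=
    h_ac.ae_le (hμ ▸ llr_withDensity_ofReal hf hf_nonneg)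
  rw [klDiv, if_pos ⟨h_ac, h_int.congr h_llr.symm⟩, integral_congr_ae h_llr]

end WithDensity

namespace ProbabilityTheory

lemma expMeasure_eq_withDensity (r : ℝ) :
    expMeasure r
      = (volume.restrict (Ioi 0)).withDensity fun x ↦ ENNReal.ofReal (r * exp (-(r * x))) := by
  change volume.withDensity (exponentialPDF r) = _
  rw [restrict_Ioi_eq_restrict_Ici, ← withDensity_indicator measurableSet_Ici]
  refine congrArg _ (funext fun x ↦ ?_)
  by_cases hx : 0 ≤ x
  · simp [exponentialPDF_of_nonneg hx, hx]
  · simp [exponentialPDF_of_neg (not_le.mp hx), hx]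

variable {r : ℝ}

lemma integral_expMeasure (hr : 0 ≤ r) (g : ℝ → ℝ) :
    ∫ x, g x ∂expMeasure r = ∫ x in Ioi 0, r * exp (-(r * x)) * g x := by
  rw [expMeasure_eq_withDensity,
    integral_withDensity_eq_integral_toReal_smul (by fun_prop) (by simp)]
  simp only [ENNReal.toReal_ofReal (by positivity : 0 ≤ r * exp _), smul_eq_mul]

lemma integrable_expMeasure_iff (hr : 0 ≤ r) {g : ℝ → ℝ} :
    Integrable g (expMeasure r) ↔ IntegrableOn (fun x ↦ r * exp (-(r * x)) * g x) (Ioi 0) := by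
  rw [expMeasure_eq_withDensity,
    integrable_withDensity_iff_integrable_smul' (by fun_prop) (by simp)]
  simp only [ENNReal.toReal_ofReal (by positivity : 0 ≤ r * exp _), smul_eq_mul, IntegrableOn]

lemma integrable_id_expMeasure (hr : 0 < r) : Integrable (fun x ↦ x) (expMeasure r) := by
  rw [integrable_expMeasure_iff hr.le]
  have h := integrableOn_rpow_mul_exp_neg_mul_rpow (s := 1) (p := 1) (by norm_num) one_pos hr
  refine IntegrableOn.congr_fun (h.const_mul r) (fun x _ ↦ ?_) measurableSet_Ioi
  simp only [rpow_one, neg_mul]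
  ring

lemma integral_id_expMeasure (hr : 0 < r) : ∫ x, x ∂expMeasure r = r⁻¹ := by
  calc ∫ x, x ∂expMeasure r
      = r * ∫ x in Ioi 0, x ^ ((2 : ℝ) - 1) * exp (-(r * x)) := by
        rw [integral_expMeasure hr.le, ← integral_const_mul]
        refine setIntegral_congr_fun measurableSet_Ioi fun x _ ↦ ?_
        norm_num
        ring
    _ = r⁻¹ := by
        rw [integral_rpow_mul_exp_neg_mul_Ioi two_pos hr, Gamma_two, rpow_two]
        field_simp

lemma expMeasure_eq_withDensity_expMeasure (a : ℝ) {b : ℝ} (hb : 0 < b) :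
    expMeasure a
      = (expMeasure b).withDensity fun x ↦ ENNReal.ofReal (a / b * exp ((b - a) * x)) := by
  rw [expMeasure_eq_withDensity a, expMeasure_eq_withDensity b,
    ← withDensity_mul _ (by fun_prop) (by fun_prop)]
  refine congrArg _ (funext fun x ↦ ?_)
  rw [Pi.mul_apply, ← ENNReal.ofReal_mul (by positivity), mul_mul_mul_comm, ← exp_add,
    mul_div_cancel₀ a hb.ne']
  ring_nf

lemma klDiv_expMeasure {a b : ℝ} (ha : 0 < a) (hb : 0 < b) :
    klDiv (expMeasure a) (expMeasure b) = ENNReal.ofReal (log a - log b + b / a - 1) := by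
  have := isProbabilityMeasure_expMeasure ha
  have := isProbabilityMeasure_expMeasure hb
  have h_log : ∀ x, log (a / b * exp ((b - a) * x)) = log a - log b + (b - a) * x := fun x ↦ by
    rw [log_mul (by positivity) (exp_pos _).ne', log_exp, log_div ha.ne' hb.ne']
  have h_int : Integrable (fun x ↦ log a - log b + (b - a) * x) (expMeasure a) :=
    (integrable_const _).add ((integrable_id_expMeasure ha).const_mul _)
  rw [klDiv_eq_ofReal_integral_log_of_eq_withDensity (expMeasure_eq_withDensity_expMeasure a hb)
    (by fun_prop) (fun x ↦ by positivity) (by simpa only [h_log] using h_int)]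
  simp only [h_log]
  rw [integral_add (integrable_const _) ((integrable_id_expMeasure ha).const_mul _),
    integral_const, integral_const_mul, integral_id_expMeasure ha, probReal_univ, one_smul]
  congr 1
  field_simp
  ring

end ProbabilityTheory

lemma antitoneOn_log_sub_log_add_div_sub_one (t : ℝ) :
    AntitoneOn (fun s ↦ log t - log s + s / t - 1) (Ioc 0 t) := by
  rintro s ⟨hs, -⟩ u ⟨hu, hut⟩ hsu
  have h_log : 1 - s / u ≤ log u - log s := by
    simpa [log_div hu.ne' hs.ne', inv_div] using one_sub_inv_le_log_of_pos (div_pos hu hs)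
  have h_div : u / t - s / t ≤ 1 - s / u := by
    rw [← sub_div, one_sub_div hu.ne']
    exact div_le_div_of_nonneg_left (by linarith) hu hut
  change log t - log u + u / t - 1 ≤ log t - log s + s / t - 1
  linarith

theorem iInf_setKL_expMeasure (β βhat : ℝ) (hβ : 0 < β) (hβhat : 0 < βhat) :
    ⨅ βtilde ∈ Set.Ioc (0 : ℝ) β,
        klDiv (ProbabilityTheory.expMeasure (1 / βtilde))
          (ProbabilityTheory.expMeasure (1 / βhat)) =
      if β < βhat then ENNReal.ofReal (Real.log βhat + β / βhat - Real.log β - 1)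
      else 0 := by
  set g : ℝ → ℝ := fun s ↦ log βhat - log s + s / βhat - 1
  have h_kl : ∀ s ∈ Ioc (0 : ℝ) β,
      klDiv (expMeasure (1 / s)) (expMeasure (1 / βhat)) = ENNReal.ofReal (g s) := by
    rintro s ⟨hs, -⟩
    rw [klDiv_expMeasure (by positivity) (by positivity)]
    simp only [g, one_div, log_inv, inv_div_inv]
    congr 1
    ring
  rw [biInf_congr h_kl]
  split_ifs with hlt
  · rw [show log βhat + β / βhat - log β - 1 = g β by simp only [g]; ring]
    refine le_antisymm (iInf₂_le β ⟨hβ, le_rfl⟩) (le_iInf₂ fun s ⟨hs, hsβ⟩ ↦ ?_)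
    exact ENNReal.ofReal_le_ofReal <| antitoneOn_log_sub_log_add_div_sub_one βhat
      ⟨hs, hsβ.trans hlt.le⟩ ⟨hβ, hlt.le⟩ hsβ
  · refine le_antisymm ((iInf₂_le βhat ⟨hβhat, not_lt.mp hlt⟩).trans_eq ?_) bot_le
    simp [g, div_self hβhat.ne']
end

section
/- Fix β > 0 and define h : ℝ → ℝ by h(η) = -Real.log (-η) - β * η - Real.log β - 1 if η > -1/β, and h(η) = 0 otherwise. Then h is convex on the interval (-∞, 0), i.e., ConvexOn ℝ (Set.Iio 0) h. -/
/-- The Set KL divergence in natural parameterization `η = -1/β̂`: for fixed `β`,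
`h β η = -log (-η) - β * η - log β - 1` if `η > -1/β`, and `0` otherwise. -/
noncomputable def setKLNat (β : ℝ) : ℝ → ℝ := fun η =>
  if -1 / β < η then -Real.log (-η) - β * η - Real.log β - 1 else 0

/-!
On `η ≤ -1/β` the family contains the target itself, so the divergence is `0`; otherwise it is
the plain divergence `KL(Exp β ‖ Exp (-1/η))`, a convex function of `η` whose minimum `0` is
attained at `η = -1/β`. Hence `setKLNat β η` is that convex function evaluated at
`max η (-1/β)`, and a convex function of one variable is nondecreasing to the right of a
minimiser, so clamping its argument at the minimiser preserves convexity.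
-/

open Set

theorem Set.image_max_const_of_mem {α : Type*} [LinearOrder α] {s : Set α} {c : α} (hc : c ∈ s) :
    (fun x => max x c) '' s = s ∩ Ici c := by
  ext y
  constructor
  · rintro ⟨x, hx, rfl⟩
    exact ⟨by rcases le_total x c with h | h <;> simp [h, hx, hc], le_max_right x c⟩
  · rintro ⟨hy, hcy⟩
    exact ⟨y, hy, max_eq_left hcy⟩

section ClampedConvex

variable {𝕜 β : Type*} [Field 𝕜] [LinearOrder 𝕜] [IsStrictOrderedRing 𝕜]
  [AddCommMonoid β] [LinearOrder β] [IsOrderedCancelAddMonoid β]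
  [Module 𝕜 β] [PosSMulStrictMono 𝕜 β] {s : Set 𝕜} {f : 𝕜 → β} {c : 𝕜}

theorem ConvexOn.monotoneOn_of_isMinOn (hf : ConvexOn 𝕜 s f) (hc : c ∈ s)
    (hmin : IsMinOn f s c) : MonotoneOn f (s ∩ Ici c) := by
  rintro x ⟨hx, hcx⟩ y ⟨hy, -⟩ hxy
  rcases (mem_Ici.mp hcx).eq_or_lt with rfl | hcx
  · exact hmin hy
  · exact hf.le_right_of_left_le'' hc hy hcx hxy (hmin hx)

theorem ConvexOn.comp_max_of_isMinOn (hf : ConvexOn 𝕜 s f) (hc : c ∈ s)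
    (hmin : IsMinOn f s c) : ConvexOn 𝕜 s (fun x => f (max x c)) := by
  have hmax : ConvexOn 𝕜 s (fun x => max x c) := (convexOn_id hf.1).sup (convexOn_const c hf.1)
  have hf' : ConvexOn 𝕜 (s ∩ Ici c) f := hf.subset inter_subset_left (hf.1.inter (convex_Ici c))
  have hmono := hf.monotoneOn_of_isMinOn hc hmin
  rw [← image_max_const_of_mem hc] at hf' hmono
  exact hf'.comp hmax hmono

end ClampedConvex

/-- `KL(Exp β ‖ Exp (-1/η))`, i.e. `log (β̂ / β) + β / β̂ - 1` at the mean `β̂ = -1/η`. -/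
noncomputable def expKLNat (β η : ℝ) : ℝ := -Real.log (-η) - β * η - Real.log β - 1

theorem convexOn_expKLNat (β : ℝ) : ConvexOn ℝ (Iio 0) (expKLNat β) := by
  have hlog : ConvexOn ℝ (Iio 0) fun η => -Real.log (-η) :=
    strictConcaveOn_log_Iio.concaveOn.neg.congr fun η _ => by simp [Real.log_neg_eq_log]
  have hlin : ConcaveOn ℝ (Iio 0) fun η => β * η + Real.log β + 1 :=
    (((LinearMap.mul ℝ ℝ β).concaveOn (convex_Iio 0)).add_const _).add_const _
  exact (hlog.sub hlin).congr fun η _ => by simp only [expKLNat, Pi.sub_apply]; ring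

theorem expKLNat_neg_one_div (β : ℝ) (hβ : β ≠ 0) : expKLNat β (-1 / β) = 0 := by
  simp [expKLNat, neg_div, hβ]

theorem expKLNat_nonneg {β η : ℝ} (hβ : 0 < β) (hη : η < 0) : 0 ≤ expKLNat β η := by
  have hu : 0 < β * -η := mul_pos hβ (neg_pos.mpr hη)
  have := Real.log_le_sub_one_of_pos hu
  rw [Real.log_mul hβ.ne' (neg_ne_zero.mpr hη.ne)] at this
  simp only [expKLNat]
  linarith

theorem isMinOn_expKLNat {β : ℝ} (hβ : 0 < β) : IsMinOn (expKLNat β) (Iio 0) (-1 / β) :=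
  fun _ hη => (expKLNat_neg_one_div β hβ.ne').symm ▸ expKLNat_nonneg hβ hη

theorem setKLNat_eq_expKLNat_max {β : ℝ} (hβ : β ≠ 0) :
    setKLNat β = fun η => expKLNat β (max η (-1 / β)) := by
  ext η
  simp only [setKLNat]
  split_ifs with h
  · rw [max_eq_left h.le, expKLNat]
  · rw [max_eq_right (not_lt.mp h), expKLNat_neg_one_div β hβ]

theorem setKLNat_convexOn (β : ℝ) (hβ : 0 < β) :
    ConvexOn ℝ (Set.Iio (0 : ℝ)) (setKLNat β) := by
  have hc : -1 / β ∈ Iio (0 : ℝ) := div_neg_of_neg_of_pos neg_one_lt_zero hβ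
  rw [setKLNat_eq_expKLNat_max hβ.ne']
  exact (convexOn_expKLNat β).comp_max_of_isMinOn hc (isMinOn_expKLNat hβ)
end
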